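/- Let τ = (1+√5)/2, R = diag(e^{−4πi/5}, e^{3πi/5}), F = [[1/τ, 1/√τ],[1/√τ, −1/τ]]. Define M₀ = F·R^{−1}·F·R·F and inductively M_j = M_{j−1}·R^{−1}·M_{j−1}†·R³·M_{j−1}·R^{−3}·M_{j−1}†·R·M_{j−1}. Then |⟨0| M₀ |0⟩| = 1/τ², and for all j ≥ 0, |⟨0| M_j |0⟩| = (1/τ)^{2·5^j}. -/

import Mathlib

/-!
Write `R = r • diag(1, ω)` with `ω = exp(7πi/5)` a primitive 10th root of unity; the scalar `r`
cancels both from the seed and from the recursion. A 2×2 unitary is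
`U = diag(1, det U) * [[a, b], [-b̄, ā]]`, and a direct computation gives
`⟨0| U D(l) U† D(m) U D(p) U† D(q) U |0⟩ = a f(|a|²)` with `D(z) = diag(1, z)` and `f` a quadratic
polynomial in `|a|²` depending on the phases. For the phases `(ω⁻¹, ω³, ω⁻³, ω)` of the recursion,
`f(x) = x²` because `ω⁴ - ω³ + ω² - ω + 1 = 0`. Hence `⟨0|M_{j+1}|0⟩ = a³ā²` for `a = ⟨0|M_j|0⟩`,
so the modulus is raised to the fifth power at each step, while `|⟨0|M₀|0⟩| = τ⁻²` because
`ω + ω⁻¹ = 2 cos(7π/5) = -τ⁻¹`.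
-/

open Matrix Complex

noncomputable def fibR : Matrix (Fin 2) (Fin 2) ℂ :=
  !![Complex.exp (-4 * Real.pi * Complex.I / 5), 0; 0, Complex.exp (3 * Real.pi * Complex.I / 5)]

noncomputable def fibF : Matrix (Fin 2) (Fin 2) ℂ :=
  !![(1 / ((1 + Real.sqrt 5) / 2) : ℝ), (1 / Real.sqrt ((1 + Real.sqrt 5) / 2) : ℝ);
     (1 / Real.sqrt ((1 + Real.sqrt 5) / 2) : ℝ), -(1 / ((1 + Real.sqrt 5) / 2) : ℝ)]

open scoped Real goldenRatio

namespace Matrix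

lemma adjugate_eq_det_smul_star_of_mem_unitary {n α : Type*} [Fintype n] [DecidableEq n]
    [CommRing α] [StarRing α] {U : Matrix n n α} (hU : U ∈ unitary (Matrix n n α)) :
    adjugate U = U.det • star U :=
  calc adjugate U = adjugate U * (U * star U) := by rw [Unitary.mul_star_self_of_mem hU, mul_one]
    _ = U.det • star U := by rw [← Matrix.mul_assoc, adjugate_mul, smul_mul, Matrix.one_mul]

lemma eq_of_mem_unitary_fin_two {α : Type*} [CommRing α] [StarRing α]
    {U : Matrix (Fin 2) (Fin 2) α} (hU : U ∈ unitary (Matrix (Fin 2) (Fin 2) α)) :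
    U = !![U 0 0, U 0 1; -(U.det * star (U 0 1)), U.det * star (U 0 0)] := by
  have h := congrFun₂ (adjugate_eq_det_smul_star_of_mem_unitary hU)
  have h00 := h 0 0
  have h10 := h 1 0
  simp only [adjugate_fin_two, of_apply, cons_val', cons_val_zero, cons_val_one,
    cons_val_fin_one, star_eq_conjTranspose, smul_apply, conjTranspose_apply, smul_eq_mul]
    at h00 h10
  rw [← h00, ← h10, neg_neg]
  exact eta_fin_two U

lemma nonsing_inv_mem_unitary {n α : Type*} [Fintype n] [DecidableEq n] [CommRing α]
    [StarRing α] {U : Matrix n n α} (hU : U ∈ unitary (Matrix n n α)) :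
    U⁻¹ ∈ unitary (Matrix n n α) := by
  rw [inv_eq_left_inv (Unitary.star_mul_self_of_mem hU)]
  exact Unitary.star_mem hU

lemma inv_smul_of_ne_zero {n K : Type*} [Fintype n] [DecidableEq n] [Field K]
    {R : Matrix n n K} (hR : IsUnit R.det) {c : K} (hc : c ≠ 0) : (c • R)⁻¹ = c⁻¹ • R⁻¹ :=
  inv_eq_left_inv (by rw [smul_mul_smul_comm, inv_mul_cancel₀ hc, nonsing_inv_mul R hR, one_smul])

lemma diagonal_mem_unitary {n α : Type*} [Fintype n] [DecidableEq n] [CommRing α] [StarRing α]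
    {v : n → α} (hv : ∀ i, v i ∈ unitary α) : diagonal v ∈ unitary (Matrix n n α) := by
  rw [← unitaryGroup, mem_unitaryGroup_iff', star_eq_conjTranspose, diagonal_conjTranspose,
    diagonal_mul_diagonal, ← diagonal_one]
  exact congrArg diagonal (funext fun i => Unitary.star_mul_self_of_mem (hv i))

end Matrix

lemma Complex.mem_unitary_of_norm_eq_one {z : ℂ} (hz : ‖z‖ = 1) : z ∈ unitary ℂ :=
  Unitary.mem_iff_star_mul_self.mpr (by rw [star_def, conj_mul', hz]; norm_num)

lemma isUnit_det_diagonal_one_cons {ω : ℂ} (hω : ω ≠ 0) : IsUnit (diagonal ![1, ω]).det := by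
  simp [hω]

lemma inv_diagonal_one_cons {ω : ℂ} (hω : ω ≠ 0) :
    (diagonal ![1, ω])⁻¹ = diagonal ![1, ω⁻¹] := by
  refine inv_eq_left_inv ?_
  rw [diagonal_mul_diagonal, ← diagonal_one]
  congr 1
  ext i
  fin_cases i <;> simp [hω]

noncomputable def braidStep (R U : Matrix (Fin 2) (Fin 2) ℂ) : Matrix (Fin 2) (Fin 2) ℂ :=
  U * R⁻¹ * Uᴴ * R ^ 3 * U * R⁻¹ ^ 3 * Uᴴ * R * U

def braidWord (U : Matrix (Fin 2) (Fin 2) ℂ) (l m p q : ℂ) : Matrix (Fin 2) (Fin 2) ℂ :=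
  U * diagonal ![1, l] * Uᴴ * diagonal ![1, m] * U * diagonal ![1, p] * Uᴴ * diagonal ![1, q] * U

def braidFactor (l m p q x : ℂ) : ℂ :=
  let k := (p - 1) * (1 - q)
  1 + k * (1 - x) + (l - 1) * (1 - x) * (1 + k * (1 - x) + m * (k * x - q))

lemma braidStep_smul (U : Matrix (Fin 2) (Fin 2) ℂ) {R : Matrix (Fin 2) (Fin 2) ℂ}
    (hR : IsUnit R.det) {c : ℂ} (hc : c ≠ 0) : braidStep (c • R) U = braidStep R U := by
  simp only [braidStep, inv_smul_of_ne_zero hR hc, smul_pow, Matrix.mul_smul, Matrix.smul_mul,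
    smul_smul]
  rw [show c * (c⁻¹ ^ 3 * (c ^ 3 * c⁻¹)) = 1 by field_simp, one_smul]

lemma braidStep_diagonal (U : Matrix (Fin 2) (Fin 2) ℂ) {ω : ℂ} (hω : ω ≠ 0) :
    braidStep (diagonal ![1, ω]) U = braidWord U ω⁻¹ (ω ^ 3) (ω⁻¹ ^ 3) ω := by
  have hpow (z : ℂ) (n : ℕ) : diagonal ![1, z] ^ n = diagonal ![1, z ^ n] := by
    rw [diagonal_pow]
    congr 1
    ext i
    fin_cases i <;> simp
  rw [braidStep, braidWord, inv_diagonal_one_cons hω, hpow, hpow]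

lemma braidStep_mem_unitary {R U : Matrix (Fin 2) (Fin 2) ℂ}
    (hR : R ∈ unitary (Matrix (Fin 2) (Fin 2) ℂ)) (hU : U ∈ unitary (Matrix (Fin 2) (Fin 2) ℂ)) :
    braidStep R U ∈ unitary (Matrix (Fin 2) (Fin 2) ℂ) := by
  have hRinv := nonsing_inv_mem_unitary hR
  exact mul_mem (mul_mem (mul_mem (mul_mem (mul_mem (mul_mem (mul_mem (mul_mem hU hRinv)
    (Unitary.star_mem hU)) (pow_mem hR 3)) hU) (pow_mem hRinv 3)) (Unitary.star_mem hU)) hR) hU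

lemma braidWord_apply_zero_zero {U : Matrix (Fin 2) (Fin 2) ℂ}
    (hU : U ∈ unitary (Matrix (Fin 2) (Fin 2) ℂ)) (l m p q : ℂ) :
    braidWord U l m p q 0 0 = U 0 0 * braidFactor l m p q (star (U 0 0) * U 0 0) := by
  have hrow : star (U 0 0) * U 0 0 + star (U 0 1) * U 0 1 = 1 := by
    have h : (U * star U) 0 0 = (1 : Matrix (Fin 2) (Fin 2) ℂ) 0 0 := by
      rw [Unitary.mul_star_self_of_mem hU]
    simpa [mul_apply, mul_comm] using h
  have hdet : star U.det * U.det = 1 := Unitary.star_mul_self_of_mem (det_of_mem_unitary hU)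
  have hform := eq_of_mem_unitary_fin_two hU
  set a := U 0 0
  set b := U 0 1
  set u := U.det
  set x := star a * a
  set y := star b * b
  rw [hform]
  -- `U = diagonal ![1, u] * S` with `S` special unitary, and `diagonal ![1, u]` commutes with the
  -- phases: it only multiplies `m` and `q` by `star u * u`, while `x + y` is the norm of a row.
  have key : braidWord !![a, b; -(u * star b), u * star a] l m p q 0 0 =
      a * ((x + y) * (x + y + (p - 1) * (1 - q * (star u * u)) * y) + (l - 1) * y *
        (x + y + (p - 1) * (1 - q * (star u * u)) * y + m * (star u * u) *
          ((p - 1) * (1 - q * (star u * u)) * x - q * (star u * u) * (x + y)))) := by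
    rw [braidWord, eta_fin_two !![a, b; -(u * star b), u * star a]ᴴ]
    simp only [diagonal_fin_two, conjTranspose_apply, mul_fin_two, of_apply, cons_val',
      cons_val_zero, cons_val_one, empty_val', cons_val_fin_one, star_neg, star_mul', star_star]
    ring
  rw [key, hdet, hrow, show y = 1 - x by linear_combination hrow]
  simp only [braidFactor]
  ring

lemma braidFactor_of_isPrimitiveRoot {ω : ℂ} (hω : IsPrimitiveRoot ω 10) (x : ℂ) :
    braidFactor ω⁻¹ (ω ^ 3) (ω⁻¹ ^ 3) ω x = x ^ 2 := by
  have h5 : ω ^ 5 = -1 := (hω.pow_of_dvd (by norm_num) (by norm_num)).eq_neg_one_of_two_right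
  have hne : ω + 1 ≠ 0 := fun h =>
    hω.pow_ne_one_of_pos_of_lt (l := 2) (by norm_num) (by norm_num)
      (by rw [eq_neg_of_add_eq_zero_left h]; norm_num)
  have hΦ : ω ^ 4 - ω ^ 3 + ω ^ 2 - ω + 1 = 0 := by
    refine (mul_eq_zero.mp ?_).resolve_left hne
    linear_combination h5
  have hinv : ω⁻¹ = -ω ^ 4 := inv_eq_of_mul_eq_one_right (by linear_combination -h5)
  have hinv3 : ω⁻¹ ^ 3 = -ω ^ 2 := by rw [hinv]; linear_combination -(ω ^ 5 - 1) * ω ^ 2 * h5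
  simp only [braidFactor]
  rw [hinv3, hinv]
  linear_combination (ω ^ 4 + x * (ω + ω ^ 3 - ω ^ 4 - ω ^ 6) - x ^ 2 * (ω + ω ^ 3 - ω ^ 6)) * hΦ

lemma reflection_mem_unitary {t s : ℝ} (h : t ^ 2 + s ^ 2 = 1) :
    !![(t : ℂ), s; s, -t] ∈ unitary (Matrix (Fin 2) (Fin 2) ℂ) := by
  have h' : (t : ℂ) ^ 2 + (s : ℂ) ^ 2 = 1 := by exact_mod_cast h
  rw [← unitaryGroup, mem_unitaryGroup_iff', star_eq_conjTranspose]
  ext i j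
  fin_cases i <;> fin_cases j <;> simp [mul_apply, ← sq] <;> first | linear_combination h' | ring

lemma reflection_mul_diagonal_apply_zero_zero (t s : ℂ) {ω : ℂ} (hω : ω ≠ 0) :
    (!![t, s; s, -t] * diagonal ![1, ω⁻¹] * !![t, s; s, -t] * diagonal ![1, ω] *
      !![t, s; s, -t]) 0 0 = t ^ 3 + t * s ^ 2 * (ω + ω⁻¹ - 1) := by
  simp only [diagonal_fin_two, mul_fin_two, of_apply, cons_val', cons_val_zero, cons_val_one,
    empty_val', cons_val_fin_one]
  field_simp
  ring

lemma Real.cos_seven_pi_div_five : Real.cos (7 * π / 5) = ψ / 2 := by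
  rw [show 7 * π / 5 = 2 * (π / 5) + π by ring, Real.cos_add_pi, Real.cos_two_mul,
    Real.cos_pi_div_five]
  linear_combination (-1 / 8 : ℝ) * Real.sq_sqrt (show (0 : ℝ) ≤ 5 by norm_num)

lemma isPrimitiveRoot_exp_seven_pi_div_five : IsPrimitiveRoot (exp (7 * π * I / 5)) 10 := by
  convert isPrimitiveRoot_exp_of_coprime 7 10 (by norm_num) (by norm_num) using 2
  push_cast
  ring

lemma exp_seven_pi_div_five_add_inv : exp (7 * π * I / 5) + (exp (7 * π * I / 5))⁻¹ = ψ := by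
  rw [← exp_neg, show (7 * π * I / 5 : ℂ) = ((7 * π / 5 : ℝ) : ℂ) * I by push_cast; ring,
    ← neg_mul, ← two_cos, ← ofReal_cos, Real.cos_seven_pi_div_five]
  push_cast
  ring

lemma one_div_goldenRatio_sq_add : (1 / φ) ^ 2 + 1 / φ = 1 := by
  rw [one_div, Real.inv_goldenRatio]
  linear_combination Real.goldenConj_sq

lemma one_div_sqrt_goldenRatio_sq : (1 / √φ) ^ 2 = 1 / φ := by
  rw [div_pow, one_pow, Real.sq_sqrt Real.goldenRatio_pos.le]

lemma fibR_eq_smul : fibR = exp (-4 * π * I / 5) • diagonal ![1, exp (7 * π * I / 5)] := by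
  rw [fibR, diagonal_fin_two]
  simp only [smul_of, smul_cons, smul_eq_mul, smul_empty, mul_one, mul_zero, cons_val_zero,
    cons_val_one, ← Complex.exp_add]
  ring_nf

lemma fibR_mem_unitary : fibR ∈ unitary (Matrix (Fin 2) (Fin 2) ℂ) := by
  rw [fibR_eq_smul]
  refine Unitary.smul_mem_of_mem (mem_unitary_of_norm_eq_one (by simp [norm_exp])) ?_
  refine diagonal_mem_unitary fun i => ?_
  fin_cases i
  · exact one_mem _
  · exact mem_unitary_of_norm_eq_one
      (isPrimitiveRoot_exp_seven_pi_div_five.norm'_eq_one (by norm_num))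

lemma fibF_mem_unitary : fibF ∈ unitary (Matrix (Fin 2) (Fin 2) ℂ) :=
  reflection_mem_unitary (by rw [one_div_sqrt_goldenRatio_sq, one_div_goldenRatio_sq_add])

lemma fibSeed_apply_zero_zero :
    (fibF * fibR⁻¹ * fibF * fibR * fibF) 0 0 = -(((1 / φ) ^ 2 : ℝ) : ℂ) := by
  have hω : exp (7 * π * I / 5) ≠ 0 := exp_ne_zero _
  rw [fibR_eq_smul, inv_smul_of_ne_zero (isUnit_det_diagonal_one_cons hω) (exp_ne_zero _),
    inv_diagonal_one_cons hω]
  simp only [Matrix.mul_smul, Matrix.smul_mul, smul_smul, mul_inv_cancel₀ (exp_ne_zero _),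
    one_smul]
  rw [fibF, reflection_mul_diagonal_apply_zero_zero _ _ hω, exp_seven_pi_div_five_add_inv]
  have h : (1 / φ) ^ 3 + 1 / φ * (1 / √φ) ^ 2 * (ψ - 1) = -(1 / φ) ^ 2 := by
    rw [one_div_sqrt_goldenRatio_sq, one_div, Real.inv_goldenRatio]
    ring
  exact_mod_cast h

lemma braidStep_fibR_apply_zero_zero {U : Matrix (Fin 2) (Fin 2) ℂ}
    (hU : U ∈ unitary (Matrix (Fin 2) (Fin 2) ℂ)) :
    braidStep fibR U 0 0 = U 0 0 * (star (U 0 0) * U 0 0) ^ 2 := by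
  have hω : exp (7 * π * I / 5) ≠ 0 := exp_ne_zero _
  rw [fibR_eq_smul, braidStep_smul U (isUnit_det_diagonal_one_cons hω) (exp_ne_zero _),
    braidStep_diagonal U hω, braidWord_apply_zero_zero hU,
    braidFactor_of_isPrimitiveRoot isPrimitiveRoot_exp_seven_pi_div_five]

theorem stmt_12 (M : ℕ → Matrix (Fin 2) (Fin 2) ℂ)
    (h0 : M 0 = fibF * fibR⁻¹ * fibF * fibR * fibF)
    (hrec : ∀ j : ℕ, M (j + 1) =
      M j * fibR⁻¹ * (M j)ᴴ * fibR^3 * M j * (fibR⁻¹)^3 * (M j)ᴴ * fibR * M j) :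
    ‖(M 0) 0 0‖ = 1 / ((1 + Real.sqrt 5) / 2)^2 ∧
    ∀ j : ℕ, ‖(M j) 0 0‖ = (1 / ((1 + Real.sqrt 5) / 2))^(2 * 5^j) := by
  have hstep (j : ℕ) : M (j + 1) = braidStep fibR (M j) := hrec j
  have hunitary (j : ℕ) : M j ∈ unitary (Matrix (Fin 2) (Fin 2) ℂ) := by
    induction j with
    | zero =>
      rw [h0]
      exact mul_mem (mul_mem (mul_mem (mul_mem fibF_mem_unitary
        (nonsing_inv_mem_unitary fibR_mem_unitary)) fibF_mem_unitary) fibR_mem_unitary)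
        fibF_mem_unitary
    | succ j ih => rw [hstep]; exact braidStep_mem_unitary fibR_mem_unitary ih
  have hbase : ‖M 0 0 0‖ = (1 / φ) ^ 2 := by
    rw [h0, fibSeed_apply_zero_zero, norm_neg, norm_real, Real.norm_of_nonneg (by positivity)]
  refine ⟨by rw [hbase, div_pow, one_pow], fun j => ?_⟩
  induction j with
  | zero => exact hbase
  | succ j ih =>
    have hfifth : ‖M (j + 1) 0 0‖ = ‖M j 0 0‖ ^ 5 := by
      rw [hstep, braidStep_fibR_apply_zero_zero (hunitary j), norm_mul, norm_pow, norm_mul,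
        norm_star]
      ring
    rw [hfifth, ih, ← pow_mul, pow_succ, mul_assoc]
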